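/- Let ℋ be a finite-dimensional complex Hilbert space, s ∈ [0,1), and let S₀ ⊆ S(ℋ) be a convex, s-perturbed Δ-invariant subset containing more than one element. Let f : S₀ → ℝ be an ALAFF function with associated functions a_f, b_f; set E_f = a_f + b_f and E_f^max(p) = (1−p)·max{E_f(t)/(1−t) : 0 ≤ t ≤ p} for p ∈ [0,1). Assume C := sup{|f(ρ)−f(σ)| : ρ, σ ∈ S₀, (1/2)‖ρ−σ‖₁ = 1−s} < +∞. Then for every ε ∈ (0,1] and all ρ, σ ∈ S₀ with (1/2)‖ρ−σ‖₁ ≤ ε, one has |f(ρ) − f(σ)| ≤ C·ε/(1−s) + ((1−s+ε)/(1−s))·E_f^max(ε/(1−s+ε)); in particular, f is uniformly continuous on S₀. -/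

import Mathlib

open Matrix MeasureTheory
open scoped Kronecker Classical ComplexOrder

noncomputable section

namespace QPaper

variable {n : Type*}

/-- A quantum state: positive semidefinite matrix with trace one. -/
def IsState [Fintype n] (ρ : Matrix n n ℂ) : Prop :=
  ρ.PosSemidef ∧ ρ.trace = 1

/-- The trace norm of a matrix: `tr √(XᴴX)`. -/
noncomputable def traceNorm [Fintype n] [DecidableEq n] (X : Matrix n n ℂ) : ℝ :=
  (((Matrix.posSemidef_conjTranspose_mul_self X).1.eigenvectorUnitary : Matrix n n ℂ) *
      Matrix.diagonal ((fun x : ℝ => (x : ℂ)) ∘ (√·) ∘ (Matrix.posSemidef_conjTranspose_mul_self X).1.eigenvalues) *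
      star ((Matrix.posSemidef_conjTranspose_mul_self X).1.eigenvectorUnitary : Matrix n n ℂ)).trace.re

/-- Functional calculus for Hermitian matrices: apply `f` to the eigenvalues. -/
noncomputable def matFun [Fintype n] [DecidableEq n] (f : ℝ → ℂ) (A : Matrix n n ℂ) :
    Matrix n n ℂ :=
  if hA : A.IsHermitian then
    (hA.eigenvectorUnitary : Matrix n n ℂ) *
      Matrix.diagonal (fun i => f (hA.eigenvalues i)) *
        (hA.eigenvectorUnitary : Matrix n n ℂ)ᴴ
  else 0

/-- Matrix logarithm on the support (0 ↦ 0). -/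
noncomputable def mlog [Fintype n] [DecidableEq n] (A : Matrix n n ℂ) : Matrix n n ℂ :=
  matFun (fun x => (Real.log x : ℂ)) A

/-- Real matrix powers on the support (Moore-Penrose style, 0 ↦ 0 for r ≠ 0). -/
noncomputable def mpow [Fintype n] [DecidableEq n] (A : Matrix n n ℂ) (r : ℝ) : Matrix n n ℂ :=
  matFun (fun x => ((x ^ r : ℝ) : ℂ)) A

/-- Complex matrix powers on the support (0 ↦ 0). -/
noncomputable def mcpow [Fintype n] [DecidableEq n] (A : Matrix n n ℂ) (z : ℂ) : Matrix n n ℂ :=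
  matFun (fun x => if x = 0 then 0 else (x : ℂ) ^ z) A

/-- The matrix `A log A`, functional calculus for `x ↦ x log x` (0 ↦ 0). -/
noncomputable def mXLogX [Fintype n] [DecidableEq n] (A : Matrix n n ℂ) : Matrix n n ℂ :=
  matFun (fun x => ((x * Real.log x : ℝ) : ℂ)) A

/-- Umegaki relative entropy `D(ρ‖K) = tr[ρ (log ρ - log K)]`. -/
noncomputable def relEnt [Fintype n] [DecidableEq n] (ρ K : Matrix n n ℂ) : ℝ :=
  ((ρ * (mlog ρ - mlog K)).trace).re

/-- Belavkin–Staszewski entropy `D̂(ρ‖K) = tr[ρ log(ρ^{1/2} K⁻¹ ρ^{1/2})]`. -/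
noncomputable def bsEnt [Fintype n] [DecidableEq n] (ρ K : Matrix n n ℂ) : ℝ :=
  ((ρ * mlog (mpow ρ (1/2) * mpow K (-1) * mpow ρ (1/2))).trace).re

/-- von Neumann entropy. -/
noncomputable def vnEnt [Fintype n] [DecidableEq n] (ρ : Matrix n n ℂ) : ℝ :=
  -(((ρ * mlog ρ).trace).re)

/-- Operator norm of a matrix. -/
noncomputable def opNorm [Fintype n] [DecidableEq n] (X : Matrix n n ℂ) : ℝ :=
  ‖Matrix.toEuclideanCLM (𝕜 := ℂ) X‖

/-- `ker K ⊆ ker ρ`. -/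
def kerLE [Fintype n] (K ρ : Matrix n n ℂ) : Prop :=
  ∀ v : n → ℂ, K.mulVec v = 0 → ρ.mulVec v = 0

/-- partial trace over the first factor. -/
noncomputable def ptrA {a b : Type*} [Fintype a] (ρ : Matrix (a × b) (a × b) ℂ) :
    Matrix b b ℂ :=
  Matrix.of fun i j => ∑ x : a, ρ (x, i) (x, j)

/-- partial trace over the second factor. -/
noncomputable def ptrB {a b : Type*} [Fintype b] (ρ : Matrix (a × b) (a × b) ℂ) :
    Matrix a a ℂ :=
  Matrix.of fun i j => ∑ x : b, ρ (i, x) (j, x)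

/-- partial trace over the middle factor of a tripartite system. -/
noncomputable def ptrMid {a b c : Type*} [Fintype b]
    (ρ : Matrix (a × b × c) (a × b × c) ℂ) : Matrix (a × c) (a × c) ℂ :=
  Matrix.of fun p q => ∑ y : b, ρ (p.1, y, p.2) (q.1, y, q.2)

/-- Conditional entropy `H_ρ(A|B) = S(ρ_{AB}) - S(ρ_B)`. -/
noncomputable def condEnt {a b : Type*} [Fintype a] [Fintype b] [DecidableEq a] [DecidableEq b]
    (ρ : Matrix (a × b) (a × b) ℂ) : ℝ :=
  vnEnt ρ - vnEnt (ptrA ρ)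

/-- Mutual information `I_ρ(A:B) = S(ρ_A) + S(ρ_B) - S(ρ_{AB})`. -/
noncomputable def mutInfo {a b : Type*} [Fintype a] [Fintype b] [DecidableEq a] [DecidableEq b]
    (ρ : Matrix (a × b) (a × b) ℂ) : ℝ :=
  vnEnt (ptrB ρ) + vnEnt (ptrA ρ) - vnEnt ρ

/-- Conditional mutual information `I_ρ(A:B|C)`. -/
noncomputable def condMutInfo {a b c : Type*} [Fintype a] [Fintype b] [Fintype c]
    [DecidableEq a] [DecidableEq b] [DecidableEq c]
    (ρ : Matrix (a × b × c) (a × b × c) ℂ) : ℝ :=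
  vnEnt (ptrMid ρ) + vnEnt (ptrA ρ) - vnEnt (ptrA (ptrA ρ)) - vnEnt ρ

/-- BS-conditional entropy `Ĥ_ρ(A|B) = -D̂(ρ ‖ 𝟙_A ⊗ ρ_B)`. -/
noncomputable def bsCondEnt {a b : Type*} [Fintype a] [Fintype b] [DecidableEq a] [DecidableEq b]
    (ρ : Matrix (a × b) (a × b) ℂ) : ℝ :=
  -(bsEnt ρ ((1 : Matrix a a ℂ) ⊗ₖ ptrA ρ))

/-- BS-mutual information `Î_ρ(A:B) = D̂(ρ ‖ ρ_A ⊗ ρ_B)`. -/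
noncomputable def bsMutInfo {a b : Type*} [Fintype a] [Fintype b] [DecidableEq a] [DecidableEq b]
    (ρ : Matrix (a × b) (a × b) ℂ) : ℝ :=
  bsEnt ρ (ptrB ρ ⊗ₖ ptrA ρ)

/-- BS-conditional mutual information `Î_ρ(A:B|C) = Ĥ_ρ(A|C) - Ĥ_ρ(A|BC)`. -/
noncomputable def bsCondMutInfo {a b c : Type*} [Fintype a] [Fintype b] [Fintype c]
    [DecidableEq a] [DecidableEq b] [DecidableEq c]
    (ρ : Matrix (a × b × c) (a × b × c) ℂ) : ℝ :=
  bsCondEnt (ptrMid ρ) - bsCondEnt (a := a) (b := b × c) ρ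

/-- Binary entropy. -/
noncomputable def binEnt (p : ℝ) : ℝ :=
  -(p * Real.log p) - (1 - p) * Real.log (1 - p)

/-- The function `f_{c₁,c₂}`. -/
noncomputable def fcc (c₁ c₂ p : ℝ) : ℝ :=
  p * Real.log (p + (1 - p) * c₁) + (1 - p) * Real.log ((1 - p) + p * c₂)

/-- The probability density `β₀`. -/
noncomputable def beta0 (t : ℝ) : ℝ :=
  (Real.pi / 2) * (Real.cosh (Real.pi * t) + 1)⁻¹


/-- Spectral positive part of a Hermitian matrix. -/
noncomputable def posPart' [Fintype n] [DecidableEq n] (X : Matrix n n ℂ) : Matrix n n ℂ :=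
  matFun (fun x => ((max x 0 : ℝ) : ℂ)) X

/-- Spectral negative part of a Hermitian matrix. -/
noncomputable def negPart' [Fintype n] [DecidableEq n] (X : Matrix n n ℂ) : Matrix n n ℂ :=
  matFun (fun x => ((max (-x) 0 : ℝ) : ℂ)) X

/-- `s`-perturbed Δ-invariance of a set of states. -/
def PerturbedDeltaInvariant {d : ℕ} (s : ℝ) (S₀ : Set (Matrix (Fin d) (Fin d) ℂ)) : Prop :=
  ∀ ρ ∈ S₀, ∀ σ ∈ S₀, ρ ≠ σ → ∃ τ : Matrix (Fin d) (Fin d) ℂ, IsState τ ∧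
    (s • τ + ((1 - s) / ((1/2) * traceNorm (ρ - σ))) • posPart' (ρ - σ) ∈ S₀) ∧
    (s • τ + ((1 - s) / ((1/2) * traceNorm (ρ - σ))) • negPart' (ρ - σ) ∈ S₀)

/-- `E_f^max`. -/
noncomputable def Emax (E : ℝ → ℝ) (p : ℝ) : ℝ :=
  (1 - p) * sSup ((fun t => E t / (1 - t)) '' Set.Icc 0 p)

/-!
Perturbed Δ-invariance turns a pair `ρ ≠ σ` at trace distance `δ` into a pair `u, v ∈ S₀` at
trace distance `1 - s` with `u - v = ((1 - s) / δ) • (ρ - σ)`. For `p = δ / (1 - s + δ)` this says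
`p • v + (1 - p) • ρ = p • u + (1 - p) • σ`, and applying the almost-affine bounds of `f` to both
sides of this mixture gives `(1 - p) |f ρ - f σ| ≤ E_f(p) + p C`. Dividing by `1 - p` and bounding
`E_f(p) / (1 - p)` by its supremum over `[0, p]` gives the estimate; since `E_f(t) / (1 - t)` is
continuous and vanishes at `0`, the bound tends to `0` with `ε`.
-/

open Set Filter Topology

section TraceNorm

variable {m : Type*} [Fintype m] [DecidableEq m]

lemma matFun_ofReal_eq_cfc {A : Matrix m m ℂ} (hA : A.IsHermitian) (g : ℝ → ℝ) :
    matFun (fun x => (g x : ℂ)) A = cfc g A := by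
  rw [matFun, dif_pos hA, hA.cfc_eq]
  rfl

lemma posPart'_sub_negPart' {A : Matrix m m ℂ} (hA : A.IsHermitian) :
    posPart' A - negPart' A = A := by
  rw [posPart', negPart', matFun_ofReal_eq_cfc hA, matFun_ofReal_eq_cfc hA,
    ← cfc_sub (fun x => max x 0) (fun x => max (-x) 0) A]
  simp only [max_zero_sub_max_neg_zero_eq_self]
  exact cfc_id' ℝ A

lemma traceNorm_eq_re_trace_cfc_sqrt (X : Matrix m m ℂ) :
    traceNorm X = (cfc Real.sqrt (Xᴴ * X)).trace.re := by
  rw [(posSemidef_conjTranspose_mul_self X).1.cfc_eq]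
  rfl

lemma traceNorm_eq_sum_sqrt_eigenvalues (X : Matrix m m ℂ) :
    traceNorm X = ∑ i, √((posSemidef_conjTranspose_mul_self X).1.eigenvalues i) := by
  rw [traceNorm, trace_mul_cycle, UnitaryGroup.star_mul_self, one_mul, trace_diagonal,
    Complex.re_sum]
  simp

lemma traceNorm_pos {X : Matrix m m ℂ} (hX : X ≠ 0) : 0 < traceNorm X := by
  have hP := posSemidef_conjTranspose_mul_self X
  rw [traceNorm_eq_sum_sqrt_eigenvalues]
  refine Finset.sum_pos' (fun i _ => Real.sqrt_nonneg _) ?_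
  by_contra! hzero
  apply hX
  rw [← conjTranspose_mul_self_eq_zero, ← hP.1.eigenvalues_eq_zero_iff]
  ext i
  exact le_antisymm (Real.sqrt_eq_zero'.1 ((hzero i (Finset.mem_univ i)).antisymm
    (Real.sqrt_nonneg _))) (hP.eigenvalues_nonneg i)

lemma traceNorm_smul {c : ℝ} (hc : 0 ≤ c) (X : Matrix m m ℂ) :
    traceNorm (c • X) = c * traceNorm X := by
  have hP := posSemidef_conjTranspose_mul_self X
  have hsqrt : cfc Real.sqrt ((c • X)ᴴ * (c • X)) = c • cfc Real.sqrt (Xᴴ * X) := by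
    rw [conjTranspose_smul, star_trivial, Matrix.smul_mul, Matrix.mul_smul, smul_smul,
      ← cfc_comp_const_mul (c * c) Real.sqrt (Xᴴ * X) (ha := hP.1.isSelfAdjoint),
      ← cfc_const_mul c Real.sqrt (Xᴴ * X)]
    refine cfc_congr fun x hx => ?_
    rw [hP.1.spectrum_real_eq_range_eigenvalues] at hx
    obtain ⟨i, rfl⟩ := hx
    simp only [Real.sqrt_mul (mul_self_nonneg c), Real.sqrt_mul_self hc]
  rw [traceNorm_eq_re_trace_cfc_sqrt, traceNorm_eq_re_trace_cfc_sqrt, hsqrt, trace_smul,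
    Complex.real_smul, Complex.re_ofReal_mul]

end TraceNorm

def HasAlmostAffineBoundsOn {E : Type*} [AddCommGroup E] [Module ℝ E] (S : Set E) (f : E → ℝ)
    (a b : ℝ → ℝ) : Prop :=
  ∀ p ∈ Icc (0:ℝ) 1, ∀ x ∈ S, ∀ y ∈ S,
    -(a p) ≤ f (p • x + (1 - p) • y) - p * f x - (1 - p) * f y ∧
    f (p • x + (1 - p) • y) - p * f x - (1 - p) * f y ≤ b p

lemma HasAlmostAffineBoundsOn.one_sub_mul_abs_sub_le {E : Type*} [AddCommGroup E] [Module ℝ E]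
    {S : Set E} {f : E → ℝ} {a b : ℝ → ℝ} (hf : HasAlmostAffineBoundsOn S f a b) {p : ℝ}
    (hp : p ∈ Icc (0:ℝ) 1) {x y u v : E} (hx : x ∈ S) (hy : y ∈ S) (hu : u ∈ S) (hv : v ∈ S)
    (hmix : p • v + (1 - p) • x = p • u + (1 - p) • y) :
    (1 - p) * |f x - f y| ≤ a p + b p + p * |f u - f v| := by
  obtain ⟨hvx_lo, hvx_hi⟩ := hf p hp v hv x hx
  obtain ⟨huy_lo, huy_hi⟩ := hf p hp u hu y hy
  rw [hmix] at hvx_lo hvx_hi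
  have hmixed : |(1 - p) * (f x - f y)| ≤ a p + b p + |p * (f u - f v)| :=
    abs_le.2 ⟨by linarith [neg_abs_le (p * (f u - f v))],
      by linarith [le_abs_self (p * (f u - f v))]⟩
  rwa [abs_mul, abs_mul, abs_of_nonneg (sub_nonneg.2 hp.2), abs_of_nonneg hp.1] at hmixed

lemma PerturbedDeltaInvariant.exists_sub_eq_smul {d : ℕ} {s : ℝ}
    {S₀ : Set (Matrix (Fin d) (Fin d) ℂ)} (hinv : PerturbedDeltaInvariant s S₀) (hs1 : s ≤ 1)
    (hS₀ : ∀ ρ ∈ S₀, IsState ρ) {ρ σ : Matrix (Fin d) (Fin d) ℂ} (hρ : ρ ∈ S₀) (hσ : σ ∈ S₀)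
    (hne : ρ ≠ σ) :
    ∃ u ∈ S₀, ∃ v ∈ S₀, u - v = ((1 - s) / ((1/2) * traceNorm (ρ - σ))) • (ρ - σ) ∧
      (1/2) * traceNorm (u - v) = 1 - s := by
  obtain ⟨τ, -, hu, hv⟩ := hinv ρ hρ σ hσ hne
  have hdist : 0 < traceNorm (ρ - σ) := traceNorm_pos (sub_ne_zero.2 hne)
  have hdiff := posPart'_sub_negPart' ((hS₀ ρ hρ).1.1.sub (hS₀ σ hσ).1.1)
  refine ⟨_, hu, _, hv, ?_, ?_⟩
  · rw [add_sub_add_left_eq_sub, ← smul_sub, hdiff]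
  · rw [add_sub_add_left_eq_sub, ← smul_sub, hdiff,
      traceNorm_smul (by positivity)]
    field_simp

lemma exists_abs_sub_le_of_ne {d : ℕ} {s C ε : ℝ} {S₀ : Set (Matrix (Fin d) (Fin d) ℂ)}
    {f : Matrix (Fin d) (Fin d) ℂ → ℝ} {a b : ℝ → ℝ} (hs1 : s < 1)
    (hS₀ : ∀ ρ ∈ S₀, IsState ρ) (hinv : PerturbedDeltaInvariant s S₀)
    (hf : HasAlmostAffineBoundsOn S₀ f a b)
    (hC : ∀ ρ ∈ S₀, ∀ σ ∈ S₀, (1/2) * traceNorm (ρ - σ) = 1 - s → |f ρ - f σ| ≤ C)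
    (hC0 : 0 ≤ C) {ρ σ : Matrix (Fin d) (Fin d) ℂ} (hρ : ρ ∈ S₀) (hσ : σ ∈ S₀) (hne : ρ ≠ σ)
    (hε : (1/2) * traceNorm (ρ - σ) ≤ ε) :
    ∃ p ∈ Icc 0 (ε / (1 - s + ε)), |f ρ - f σ| ≤ C * ε / (1 - s) + (a p + b p) / (1 - p) := by
  obtain ⟨u, hu, v, hv, huv, hdist_uv⟩ := hinv.exists_sub_eq_smul hs1.le hS₀ hρ hσ hne
  have hδ : 0 < (1/2) * traceNorm (ρ - σ) := by
    have := traceNorm_pos (sub_ne_zero.2 hne); positivity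
  obtain ⟨δ, hδ_def⟩ : ∃ δ, (1/2) * traceNorm (ρ - σ) = δ := ⟨_, rfl⟩
  rw [hδ_def] at huv hε hδ
  obtain ⟨p, hp⟩ : ∃ p, p = δ / (1 - s + δ) := ⟨_, rfl⟩
  have hs : 0 < 1 - s := sub_pos.2 hs1
  have hsδ : 0 < 1 - s + δ := by linarith
  have hp0 : 0 ≤ p := hp ▸ div_nonneg hδ.le hsδ.le
  have hp1 : 1 - p = (1 - s) / (1 - s + δ) := by rw [hp]; field_simp; ring
  have hp1_pos : 0 < 1 - p := hp1 ▸ div_pos hs hsδ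
  have hratio : p / (1 - p) = δ / (1 - s) := by rw [hp1, hp]; field_simp
  have hmix : p • v + (1 - p) • ρ = p • u + (1 - p) • σ := by
    have hpδ : p * ((1 - s) / δ) = 1 - p := by rw [hp1, hp]; field_simp
    rw [← sub_eq_zero]
    calc p • v + (1 - p) • ρ - (p • u + (1 - p) • σ) = (1 - p) • (ρ - σ) - p • (u - v) := by
          module
      _ = 0 := by rw [huv, smul_smul, hpδ, sub_self]
  refine ⟨p, ⟨hp0, ?_⟩, ?_⟩
  · rw [hp, div_le_div_iff₀ hsδ (by linarith)]
    nlinarith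
  have key := hf.one_sub_mul_abs_sub_le ⟨hp0, by linarith⟩ hρ hσ hu hv hmix
  rw [← le_div_iff₀' hp1_pos] at key
  calc |f ρ - f σ| ≤ (a p + b p + p * |f u - f v|) / (1 - p) := key
    _ ≤ (a p + b p + p * C) / (1 - p) := by gcongr; exact hC u hu v hv hdist_uv
    _ = p / (1 - p) * C + (a p + b p) / (1 - p) := by ring
    _ ≤ C * ε / (1 - s) + (a p + b p) / (1 - p) := by
      rw [hratio, div_mul_eq_mul_div, mul_comm δ]
      gcongr

lemma continuousOn_div_one_sub {E : ℝ → ℝ} (hE : ContinuousOn E (Icc 0 1)) {q : ℝ}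
    (hq : q < 1) : ContinuousOn (fun t => E t / (1 - t)) (Icc 0 q) :=
  (hE.mono (Icc_subset_Icc_right hq.le)).div (continuousOn_const.sub continuousOn_id)
    fun _ ht => (sub_pos.2 (ht.2.trans_lt hq)).ne'

lemma div_mul_Emax_div_add (E : ℝ → ℝ) {r ε : ℝ} (hr : 0 < r) (hε : 0 ≤ ε) :
    (r + ε) / r * Emax E (ε / (r + ε)) =
      sSup ((fun t => E t / (1 - t)) '' Icc 0 (ε / (r + ε))) := by
  have hcompl : 1 - ε / (r + ε) = r / (r + ε) := by
    have : r + ε ≠ 0 := by linarith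
    field_simp
    ring
  rw [Emax, hcompl, ← mul_assoc, div_mul_div_comm, mul_comm (r + ε) r, div_self (by positivity),
    one_mul]

theorem abs_sub_le_of_half_traceNorm_le {d : ℕ} {s C ε : ℝ} {S₀ : Set (Matrix (Fin d) (Fin d) ℂ)}
    {f : Matrix (Fin d) (Fin d) ℂ → ℝ} {a b : ℝ → ℝ} (hs1 : s < 1)
    (hS₀ : ∀ ρ ∈ S₀, IsState ρ) (hinv : PerturbedDeltaInvariant s S₀)
    (hf : HasAlmostAffineBoundsOn S₀ f a b)
    (hC : ∀ ρ ∈ S₀, ∀ σ ∈ S₀, (1/2) * traceNorm (ρ - σ) = 1 - s → |f ρ - f σ| ≤ C)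
    (hC0 : 0 ≤ C) (hE : ContinuousOn (fun t => a t + b t) (Icc 0 1)) (hE0 : a 0 + b 0 = 0)
    (hε : 0 ≤ ε) {ρ σ : Matrix (Fin d) (Fin d) ℂ} (hρ : ρ ∈ S₀) (hσ : σ ∈ S₀)
    (hdist : (1/2) * traceNorm (ρ - σ) ≤ ε) :
    |f ρ - f σ| ≤ C * ε / (1 - s) +
      sSup ((fun t => (a t + b t) / (1 - t)) '' Icc 0 (ε / (1 - s + ε))) := by
  have hs : 0 < 1 - s := sub_pos.2 hs1
  have hq0 : 0 ≤ ε / (1 - s + ε) := div_nonneg hε (by linarith)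
  have hq1 : ε / (1 - s + ε) < 1 := (div_lt_one (by linarith)).2 (by linarith)
  have hbdd := (isCompact_Icc.image_of_continuousOn (continuousOn_div_one_sub hE hq1)).bddAbove
  rcases eq_or_ne ρ σ with rfl | hne
  · have hsSup : 0 ≤ sSup ((fun t => (a t + b t) / (1 - t)) '' Icc 0 (ε / (1 - s + ε))) :=
      le_csSup_of_le hbdd (mem_image_of_mem _ ⟨le_rfl, hq0⟩) (by simp [hE0])
    rw [sub_self, abs_zero]
    positivity
  · obtain ⟨p, hp, hbound⟩ := exists_abs_sub_le_of_ne hs1 hS₀ hinv hf hC hC0 hρ hσ hne hdist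
    exact hbound.trans (add_le_add le_rfl (le_csSup hbdd (mem_image_of_mem _ hp)))

lemma tendsto_sSup_image_Icc_zero {g : ℝ → ℝ} (hg : ContinuousWithinAt g (Ici 0) 0)
    (hg0 : g 0 = 0) : Tendsto (fun q => sSup (g '' Icc 0 q)) (𝓝[≥] 0) (𝓝 0) := by
  rw [Metric.tendsto_nhds]
  intro δ hδ
  obtain ⟨u, hu, hball⟩ := Metric.continuousWithinAt_iff.1 hg (δ / 2) (half_pos hδ)
  filter_upwards [Ico_mem_nhdsGE hu] with q hq
  have hbound : ∀ y ∈ g '' Icc 0 q, y ≤ δ / 2 := by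
    rintro _ ⟨t, ht, rfl⟩
    have hgt := hball ht.1 <| by
      rw [Real.dist_eq, sub_zero, abs_of_nonneg ht.1]; linarith [ht.2, hq.2]
    rw [Real.dist_eq, hg0, sub_zero] at hgt
    exact (le_abs_self _).trans hgt.le
  have hmem : g 0 ∈ g '' Icc 0 q := mem_image_of_mem g ⟨le_rfl, hq.1⟩
  have hlo : 0 ≤ sSup (g '' Icc 0 q) := le_csSup_of_le ⟨δ / 2, hbound⟩ hmem hg0.ge
  rw [Real.dist_eq, sub_zero, abs_of_nonneg hlo]
  linarith [csSup_le ⟨_, hmem⟩ hbound]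

lemma tendsto_linear_add_sSup_image_Icc {s C : ℝ} (hs1 : s < 1) {g : ℝ → ℝ}
    (hg : ContinuousWithinAt g (Ici 0) 0) (hg0 : g 0 = 0) :
    Tendsto (fun ε => C * ε / (1 - s) + sSup (g '' Icc 0 (ε / (1 - s + ε)))) (𝓝[>] 0) (𝓝 0) := by
  have hlin : Tendsto (fun ε => C * ε / (1 - s)) (𝓝[>] 0) (𝓝 0) := by
    simpa using ((continuous_const.mul continuous_id).div_const (1 - s)).tendsto 0
      |>.mono_left nhdsWithin_le_nhds
  have hq : Tendsto (fun ε => ε / (1 - s + ε)) (𝓝[>] 0) (𝓝[≥] 0) := by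
    refine tendsto_nhdsWithin_iff.2 ⟨?_, ?_⟩
    · have hcont : ContinuousAt (fun ε : ℝ => ε / (1 - s + ε)) 0 :=
        continuousAt_id.div (continuousAt_const.add continuousAt_id) (by simp; linarith)
      simpa using hcont.tendsto.mono_left nhdsWithin_le_nhds
    · filter_upwards [Ioo_mem_nhdsGT (show (0:ℝ) < 1 - s by linarith)] with ε hε
      exact div_nonneg hε.1.le (by linarith [hε.1])
  simpa using hlin.add ((tendsto_sSup_image_Icc_zero hg hg0).comp hq)

theorem alaff_method_general {d : ℕ} (s : ℝ) (hs1 : s < 1)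
    (S₀ : Set (Matrix (Fin d) (Fin d) ℂ))
    (hS₀state : ∀ ρ ∈ S₀, IsState ρ)
    (hinv : PerturbedDeltaInvariant s S₀)
    (htwo : ∃ ρ ∈ S₀, ∃ σ ∈ S₀, ρ ≠ σ)
    (f : Matrix (Fin d) (Fin d) ℂ → ℝ) (a b : ℝ → ℝ)
    (ha0 : a 0 = 0) (hb0 : b 0 = 0)
    (haC : ContinuousOn a (Set.Icc 0 1)) (hbC : ContinuousOn b (Set.Icc 0 1))
    (halaff : ∀ p ∈ Set.Icc (0:ℝ) 1, ∀ ρ ∈ S₀, ∀ σ ∈ S₀,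
      -(a p) ≤ f (p • ρ + (1 - p) • σ) - p * f ρ - (1 - p) * f σ ∧
      f (p • ρ + (1 - p) • σ) - p * f ρ - (1 - p) * f σ ≤ b p)
    (C : ℝ)
    (hC : ∀ ρ ∈ S₀, ∀ σ ∈ S₀, (1/2) * traceNorm (ρ - σ) = 1 - s → |f ρ - f σ| ≤ C) :
    (∀ ε : ℝ, 0 < ε → ε ≤ 1 → ∀ ρ ∈ S₀, ∀ σ ∈ S₀, (1/2) * traceNorm (ρ - σ) ≤ ε →
      |f ρ - f σ| ≤ C * ε / (1 - s) +
        ((1 - s + ε) / (1 - s)) * Emax (fun t => a t + b t) (ε / (1 - s + ε))) ∧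
    (∀ δ : ℝ, 0 < δ → ∃ η : ℝ, 0 < η ∧ ∀ ρ ∈ S₀, ∀ σ ∈ S₀,
      traceNorm (ρ - σ) < η → |f ρ - f σ| < δ) := by
  have hC0 : 0 ≤ C := by
    obtain ⟨ρ, hρ, σ, hσ, hne⟩ := htwo
    obtain ⟨u, hu, v, hv, -, huv⟩ := hinv.exists_sub_eq_smul hs1.le hS₀state hρ hσ hne
    exact (abs_nonneg _).trans (hC u hu v hv huv)
  have hE : ContinuousOn (fun t => a t + b t) (Icc 0 1) := haC.add hbC
  have hE0 : a 0 + b 0 = 0 := by rw [ha0, hb0, add_zero]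
  have bound := fun ε (hε : 0 ≤ ε) ρ hρ σ hσ =>
    abs_sub_le_of_half_traceNorm_le hs1 hS₀state hinv halaff hC hC0 hE hE0 hε
      (ρ := ρ) (σ := σ) hρ hσ
  refine ⟨fun ε hε _ ρ hρ σ hσ hdist => ?_, fun δ hδ => ?_⟩
  · rw [div_mul_Emax_div_add _ (sub_pos.2 hs1) hε.le]
    exact bound ε hε.le ρ hρ σ hσ hdist
  · have hg : ContinuousWithinAt (fun t => (a t + b t) / (1 - t)) (Ici 0) 0 :=
      (continuousOn_div_one_sub hE one_half_lt_one 0 ⟨le_rfl, one_half_pos.le⟩)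
        |>.mono_of_mem_nhdsWithin (Icc_mem_nhdsGE one_half_pos)
    obtain ⟨ε, hεδ, hε⟩ := ((tendsto_linear_add_sSup_image_Icc hs1 hg (by simp [hE0])).eventually
      (gt_mem_nhds hδ)).and self_mem_nhdsWithin |>.exists
    exact ⟨2 * ε, by positivity, fun ρ hρ σ hσ hdist =>
      (bound ε (le_of_lt hε) ρ hρ σ hσ (by linarith)).trans_lt hεδ⟩

/-- **The ALAFF method**. -/
theorem alaff_method {d : ℕ} (s : ℝ) (hs0 : 0 ≤ s) (hs1 : s < 1)
    (S₀ : Set (Matrix (Fin d) (Fin d) ℂ))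
    (hS₀state : ∀ ρ ∈ S₀, IsState ρ)
    (hconv : Convex ℝ S₀)
    (hinv : PerturbedDeltaInvariant s S₀)
    (htwo : ∃ ρ ∈ S₀, ∃ σ ∈ S₀, ρ ≠ σ)
    (f : Matrix (Fin d) (Fin d) ℂ → ℝ) (a b : ℝ → ℝ)
    (ha0 : a 0 = 0) (hb0 : b 0 = 0)
    (haC : ContinuousOn a (Set.Icc 0 1)) (hbC : ContinuousOn b (Set.Icc 0 1))
    (haM : MonotoneOn a (Set.Icc 0 (1/2))) (hbM : MonotoneOn b (Set.Icc 0 (1/2)))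
    (halaff : ∀ p ∈ Set.Icc (0:ℝ) 1, ∀ ρ ∈ S₀, ∀ σ ∈ S₀,
      -(a p) ≤ f (p • ρ + (1 - p) • σ) - p * f ρ - (1 - p) * f σ ∧
      f (p • ρ + (1 - p) • σ) - p * f ρ - (1 - p) * f σ ≤ b p)
    (C : ℝ)
    (hC : ∀ ρ ∈ S₀, ∀ σ ∈ S₀, (1/2) * traceNorm (ρ - σ) = 1 - s → |f ρ - f σ| ≤ C) :
    (∀ ε : ℝ, 0 < ε → ε ≤ 1 → ∀ ρ ∈ S₀, ∀ σ ∈ S₀, (1/2) * traceNorm (ρ - σ) ≤ ε →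
      |f ρ - f σ| ≤ C * ε / (1 - s) +
        ((1 - s + ε) / (1 - s)) * Emax (fun t => a t + b t) (ε / (1 - s + ε))) ∧
    (∀ δ : ℝ, 0 < δ → ∃ η : ℝ, 0 < η ∧ ∀ ρ ∈ S₀, ∀ σ ∈ S₀,
      traceNorm (ρ - σ) < η → |f ρ - f σ| < δ) :=
  alaff_method_general s hs1 S₀ hS₀state hinv htwo f a b ha0 hb0 haC hbC halaff C hC

end QPaper
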